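/- For all indices i, j, k, ℓ ∈ {1, …, M}, the second mixed moment of the Monte-Carlo weight estimators satisfies N² E[γ̂²_{ij} γ̂²_{kℓ}] = N E[ε_{11}⁴] Σ_{p=1}^n W_{ip} W_{jp} W_{kp} W_{ℓp} + N E[ε_{11}²]² Σ_{p≠q} W_{ip} W_{jp} W_{kq} W_{ℓq} + N E[ε_{11}²]² Σ_{p≠q} W_{ip} W_{jq} W_{kp} W_{ℓq} + N E[ε_{11}²]² Σ_{p≠q} W_{ip} W_{jq} W_{kq} W_{ℓp} + N(N−1) E[ε_{11}²]² Σ_{p,q=1}^n W_{ip} W_{jp} W_{kq} W_{ℓq}, where sums indexed by p≠q range over ordered pairs of distinct indices in {1, …, n}. -/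

import Mathlib

/-!
Expanding both estimators, `N² E[γ̂²_{ij} γ̂²_{kℓ}]` is the sum over pairs of samples `(a, b)` of
`E[(Wε_a)_i (Wε_a)_j (Wε_b)_k (Wε_b)_ℓ]`, a fourth moment of four linear forms in the independent,
centred, unit-variance family `(ε_{pk})`. Such a moment is the sum over the three pairings of the
four forms of the products of their inner products (Isserlis), corrected by `E[ε⁴] - 3` times the
diagonal term. The two pairings that match sample `a` with sample `b`, and the diagonal correction,
vanish unless `a = b`, so the `N²` pairs contribute `(W Wᵀ)_{ij} (W Wᵀ)_{kℓ}` each and the `N`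
diagonal pairs contribute in addition the remaining terms.
-/

open MeasureTheory ProbabilityTheory

instance ENNReal.holderTriple_four_four_two : ENNReal.HolderTriple 4 4 2 where
  inv_add_inv_eq_inv := by
    rw [← two_mul, show (4 : ENNReal) = 2 * 2 by norm_num, ENNReal.mul_inv (by simp) (by simp),
      ← mul_assoc, ENNReal.mul_inv_cancel (by simp) (by simp), one_mul]

theorem MeasureTheory.MemLp.integrable_mul_mul_mul {Ω : Type*} [MeasurableSpace Ω]
    {μ : Measure Ω} {f g h k : Ω → ℝ} (hf : MemLp f 4 μ) (hg : MemLp g 4 μ) (hh : MemLp h 4 μ)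
    (hk : MemLp k 4 μ) : Integrable (fun ω => f ω * g ω * h ω * k ω) μ := by
  simpa [Pi.mul_def, mul_assoc] using (hg.mul' hf (r := 2)).integrable_mul (hk.mul' hh (r := 2))

theorem sum_sum_ite_eq_sub_sum_diag {κ G : Type*} [Fintype κ] [DecidableEq κ] [AddCommGroup G]
    (f : κ → κ → G) :
    ∑ p, ∑ q, (if p = q then 0 else f p q) = ∑ p, ∑ q, f p q - ∑ p, f p p := by
  rw [← Finset.sum_sub_distrib]
  refine Fintype.sum_congr _ _ fun p => ?_
  rw [Finset.sum_ite, Finset.sum_const_zero, zero_add, Finset.filter_ne,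
    Finset.sum_erase_eq_sub (Finset.mem_univ p)]

theorem sq_mul_integral_mean_mul_mean {Ω : Type*} [MeasurableSpace Ω] {μ : Measure Ω} {N : ℕ}
    (hN : N ≠ 0) (f g : Fin N → Ω → ℝ) (hfg : ∀ a b, Integrable (fun ω => f a ω * g b ω) μ) :
    (N : ℝ) ^ 2 * ∫ ω, ((N : ℝ)⁻¹ * ∑ a, f a ω) * ((N : ℝ)⁻¹ * ∑ b, g b ω) ∂μ =
      ∑ a, ∑ b, ∫ ω, f a ω * g b ω ∂μ := by
  have expand (ω : Ω) : ((N : ℝ)⁻¹ * ∑ a, f a ω) * ((N : ℝ)⁻¹ * ∑ b, g b ω) =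
      (N : ℝ)⁻¹ ^ 2 * ∑ a, ∑ b, f a ω * g b ω := by
    rw [mul_mul_mul_comm, Finset.sum_mul_sum, ← sq]
  rw [integral_congr_ae (ae_of_all _ expand), integral_const_mul,
    integral_finsetSum _ fun a _ => by fun_prop]
  simp_rw [integral_finsetSum _ fun b _ => hfg _ b]
  field_simp

namespace ProbabilityTheory.iIndepFun

section

variable {Ω ι : Type*} [MeasurableSpace Ω] {μ : Measure Ω} {ε : ι → Ω → ℝ}
  (hindep : iIndepFun ε μ) (hmeas : ∀ t, Measurable (ε t))
include hindep hmeas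

theorem integral_mul_mul_mul_eq_zero_of_ne (hmean : ∀ t, ∫ ω, ε t ω ∂μ = 0) {u v w x : ι}
    (huv : u ≠ v) (huw : u ≠ w) (hux : u ≠ x) :
    ∫ ω, ε u ω * ε v ω * ε w ω * ε x ω ∂μ = 0 := by
  classical
  have hdisj : Disjoint ({u} : Finset ι) {v, w, x} := by simp [huv, huw, hux]
  have hφ : Measurable fun y : ({u} : Finset ι) → ℝ => y ⟨u, by simp⟩ := by fun_prop
  have hψ : Measurable fun y : ({v, w, x} : Finset ι) → ℝ =>
      y ⟨v, by simp⟩ * y ⟨w, by simp⟩ * y ⟨x, by simp⟩ := by fun_prop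
  have h := ((hindep.indepFun_finset _ _ hdisj hmeas).comp hφ hψ).integral_fun_mul_eq_mul_integral
    (by fun_prop) (by fun_prop)
  simp only [Function.comp_apply, mul_assoc] at h ⊢
  simp [h, hmean]

theorem integral_sq_mul_sq_eq_one_of_ne (hvar : ∀ t, ∫ ω, ε t ω ^ 2 ∂μ = 1) {u v : ι}
    (huv : u ≠ v) : ∫ ω, ε u ω ^ 2 * ε v ω ^ 2 ∂μ = 1 := by
  have := ((hindep.indepFun huv).comp (measurable_id.pow_const 2)
    (measurable_id.pow_const 2)).integral_fun_mul_eq_mul_integral (by fun_prop) (by fun_prop)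
  simpa [hvar] using this

/-- Isserlis' formula, corrected by `m₄ - 3` since the `ε t` need not be Gaussian. -/
theorem integral_mul_mul_mul [DecidableEq ι] (hmean : ∀ t, ∫ ω, ε t ω ∂μ = 0)
    (hvar : ∀ t, ∫ ω, ε t ω ^ 2 ∂μ = 1) {m₄ : ℝ} (hm₄ : ∀ t, ∫ ω, ε t ω ^ 4 ∂μ = m₄)
    (u v w x : ι) :
    ∫ ω, ε u ω * ε v ω * ε w ω * ε x ω ∂μ =
      (if u = v then 1 else 0) * (if w = x then 1 else 0)
        + (if u = w then 1 else 0) * (if v = x then 1 else 0)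
        + (if u = x then 1 else 0) * (if v = w then 1 else 0)
        + (m₄ - 3) * (if u = v ∧ u = w ∧ u = x then 1 else 0) := by
  have vanish {a b c d : ι} (hab : a ≠ b) (hac : a ≠ c) (had : a ≠ d) :=
    hindep.integral_mul_mul_mul_eq_zero_of_ne hmeas hmean hab hac had
  have pair {a b : ι} (hab : a ≠ b) := hindep.integral_sq_mul_sq_eq_one_of_ne hmeas hvar hab
  have rearrange {f g : Ω → ℝ} {c : ℝ} (hfg : ∀ ω, f ω = g ω) (hg : ∫ ω, g ω ∂μ = c) :
      ∫ ω, f ω ∂μ = c := (integral_congr_ae (ae_of_all _ hfg)).trans hg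
  rcases eq_or_ne u v with rfl | huv
  · rcases eq_or_ne w x with rfl | hwx
    · rcases eq_or_ne u w with rfl | huw
      · exact (rearrange (fun ω => by ring) (hm₄ u)).trans
          (by simp only [↓reduceIte, mul_one, and_self]; ring)
      · exact (rearrange (fun ω => by ring) (pair huw)).trans (by simp [huw])
    · rcases eq_or_ne w u with rfl | hwu
      · exact (rearrange (fun ω => by ring) (vanish hwx.symm hwx.symm hwx.symm)).trans
          (by simp [hwx])
      · exact (rearrange (fun ω => by ring) (vanish hwu hwu hwx)).trans
          (by simp [hwx, hwu.symm])
  · rcases eq_or_ne u w with rfl | huw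
    · rcases eq_or_ne v x with rfl | hvx
      · exact (rearrange (fun ω => by ring) (pair huv)).trans (by simp [huv])
      · exact (rearrange (fun ω => by ring) (vanish huv.symm huv.symm hvx)).trans
          (by simp [huv, hvx, huv.symm])
    · rcases eq_or_ne u x with rfl | hux
      · rcases eq_or_ne v w with rfl | hvw
        · exact (rearrange (fun ω => by ring) (pair huv)).trans (by simp [huv])
        · exact (rearrange (fun ω => by ring) (vanish huv.symm hvw huv.symm)).trans
            (by simp [huv, huw, hvw])
      · exact (vanish huv huw hux).trans (by simp [huv, huw, hux])

theorem integral_sum_mul_sum_mul_sum_mul_sum [Fintype ι]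
    (hmean : ∀ t, ∫ ω, ε t ω ∂μ = 0) (hvar : ∀ t, ∫ ω, ε t ω ^ 2 ∂μ = 1)
    (hL4 : ∀ t, MemLp (ε t) 4 μ) {m₄ : ℝ} (hm₄ : ∀ t, ∫ ω, ε t ω ^ 4 ∂μ = m₄)
    (A B C D : ι → ℝ) :
    ∫ ω, (∑ t, A t * ε t ω) * (∑ t, B t * ε t ω) * (∑ t, C t * ε t ω) * (∑ t, D t * ε t ω) ∂μ =
      (∑ t, A t * B t) * (∑ t, C t * D t) + (∑ t, A t * C t) * (∑ t, B t * D t)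
        + (∑ t, B t * C t) * (∑ t, A t * D t) + (m₄ - 3) * ∑ t, A t * B t * C t * D t := by
  classical
  have hint (t u v w : ι) : Integrable (fun ω => ε t ω * ε u ω * ε v ω * ε w ω) μ :=
    (hL4 t).integrable_mul_mul_mul (hL4 u) (hL4 v) (hL4 w)
  have expand (ω : Ω) :
      (∑ t, A t * ε t ω) * (∑ t, B t * ε t ω) * (∑ t, C t * ε t ω) * (∑ t, D t * ε t ω) =
        ∑ w, ∑ v, ∑ u, ∑ t, A t * B u * C v * D w * (ε t ω * ε u ω * ε v ω * ε w ω) := by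
    simp only [Finset.sum_mul, Finset.mul_sum]
    ac_rfl
  rw [integral_congr_ae (ae_of_all _ expand)]
  simp (disch := intro _ _; fun_prop) only [integral_finsetSum, integral_const_mul,
    hindep.integral_mul_mul_mul hmeas hmean hvar hm₄]
  simp only [mul_add, Finset.sum_add_distrib, mul_ite, mul_one, mul_zero, ite_and,
    Finset.sum_ite_irrel, Finset.sum_const_zero, Finset.sum_ite_eq', Finset.mem_univ, if_true,
    Finset.sum_mul, Finset.mul_sum]
  ac_rfl

end

theorem integral_sample_forms_mul {Ω κ α : Type*} [MeasurableSpace Ω] {μ : Measure Ω}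
    [Fintype κ] [Fintype α] [DecidableEq α] {ε : κ × α → Ω → ℝ} (hindep : iIndepFun ε μ)
    (hmeas : ∀ t, Measurable (ε t)) (hmean : ∀ t, ∫ ω, ε t ω ∂μ = 0)
    (hvar : ∀ t, ∫ ω, ε t ω ^ 2 ∂μ = 1) (hL4 : ∀ t, MemLp (ε t) 4 μ) {m₄ : ℝ}
    (hm₄ : ∀ t, ∫ ω, ε t ω ^ 4 ∂μ = m₄) (w₁ w₂ w₃ w₄ : κ → ℝ) (a b : α) :
    ∫ ω, (∑ p, w₁ p * ε (p, a) ω) * (∑ p, w₂ p * ε (p, a) ω) *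
        ((∑ p, w₃ p * ε (p, b) ω) * (∑ p, w₄ p * ε (p, b) ω)) ∂μ =
      (∑ p, w₁ p * w₂ p) * (∑ p, w₃ p * w₄ p) + if a = b then
        (∑ p, w₁ p * w₃ p) * (∑ p, w₂ p * w₄ p) + (∑ p, w₁ p * w₄ p) * (∑ p, w₂ p * w₃ p)
          + (m₄ - 3) * ∑ p, w₁ p * w₂ p * w₃ p * w₄ p else 0 := by
  have block (w : κ → ℝ) (a : α) (ω : Ω) :
      ∑ p, w p * ε (p, a) ω = ∑ t, (if t.2 = a then w t.1 else 0) * ε t ω := by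
    simp [Fintype.sum_prod_type, ite_mul]
  simp only [block, ← mul_assoc]
  rw [hindep.integral_sum_mul_sum_mul_sum_mul_sum hmeas hmean hvar hL4 hm₄]
  by_cases hab : a = b
  · subst hab
    simp only [mul_ite, ite_mul, zero_mul, mul_zero, Fintype.sum_prod_type, Finset.sum_ite_eq',
      Finset.mem_univ, ↓reduceIte]
    ring
  · simp [Fintype.sum_prod_type, ite_mul, mul_ite, hab, Ne.symm hab]

end ProbabilityTheory.iIndepFun

theorem mc_weight_estimator_second_mixed_moment_general
    {Ω : Type*} [MeasurableSpace Ω] (μ : Measure Ω)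
    {M n N : ℕ} (hn : 0 < n) (hN : 0 < N)
    (W : Matrix (Fin M) (Fin n) ℝ)
    (ε : Fin n × Fin N → Ω → ℝ)
    (hmeas : ∀ pk, Measurable (ε pk))
    (hindep : iIndepFun ε μ)
    (hident : ∀ pk qk, IdentDistrib (ε pk) (ε qk) μ μ)
    (hL4 : ∀ pk, MemLp (ε pk) 4 μ)
    (hmean : ∀ pk, ∫ ω, ε pk ω ∂μ = 0)
    (hvar : ∀ pk, ∫ ω, (ε pk ω) ^ 2 ∂μ = 1)
    (i j k l : Fin M) :
    (N : ℝ) ^ 2 *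
        ∫ ω,
          ((N : ℝ)⁻¹ * ∑ a : Fin N,
              (∑ p : Fin n, W i p * ε (p, a) ω) * (∑ p : Fin n, W j p * ε (p, a) ω)) *
          ((N : ℝ)⁻¹ * ∑ b : Fin N,
              (∑ p : Fin n, W k p * ε (p, b) ω) * (∑ p : Fin n, W l p * ε (p, b) ω)) ∂μ
      = (N : ℝ) * (∫ ω, (ε (⟨0, hn⟩, ⟨0, hN⟩) ω) ^ 4 ∂μ) *
            ∑ p : Fin n, W i p * W j p * W k p * W l p
        + (N : ℝ) * (∫ ω, (ε (⟨0, hn⟩, ⟨0, hN⟩) ω) ^ 2 ∂μ) ^ 2 *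
            ∑ p : Fin n, ∑ q : Fin n,
              (if p = q then 0 else W i p * W j p * W k q * W l q)
        + (N : ℝ) * (∫ ω, (ε (⟨0, hn⟩, ⟨0, hN⟩) ω) ^ 2 ∂μ) ^ 2 *
            ∑ p : Fin n, ∑ q : Fin n,
              (if p = q then 0 else W i p * W j q * W k p * W l q)
        + (N : ℝ) * (∫ ω, (ε (⟨0, hn⟩, ⟨0, hN⟩) ω) ^ 2 ∂μ) ^ 2 *
            ∑ p : Fin n, ∑ q : Fin n,
              (if p = q then 0 else W i p * W j q * W k q * W l p)
        + (N : ℝ) * ((N : ℝ) - 1) * (∫ ω, (ε (⟨0, hn⟩, ⟨0, hN⟩) ω) ^ 2 ∂μ) ^ 2 *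
            ∑ p : Fin n, ∑ q : Fin n, W i p * W j p * W k q * W l q := by
  set m₄ := ∫ ω, ε (⟨0, hn⟩, ⟨0, hN⟩) ω ^ 4 ∂μ
  have hm₄ (t : Fin n × Fin N) : ∫ ω, ε t ω ^ 4 ∂μ = m₄ :=
    ((hident _ _).comp (measurable_id.pow_const 4)).integral_eq
  have hform (i : Fin M) (a : Fin N) : MemLp (fun ω => ∑ p, W i p * ε (p, a) ω) 4 μ :=
    memLp_finsetSum _ fun p _ => (hL4 (p, a)).const_mul (W i p)
  rw [sq_mul_integral_mean_mul_mean hN.ne' _ _ fun a b => by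
    simpa only [mul_assoc] using
      (hform i a).integrable_mul_mul_mul (hform j a) (hform k b) (hform l b)]
  simp only [hindep.integral_sample_forms_mul hmeas hmean hvar hL4 hm₄, Finset.sum_add_distrib,
    Finset.sum_ite_eq, Finset.mem_univ, if_true, Finset.sum_const, Finset.card_univ,
    Fintype.card_fin, nsmul_eq_mul]
  rw [hvar, sum_sum_ite_eq_sub_sum_diag, sum_sum_ite_eq_sub_sum_diag, sum_sum_ite_eq_sub_sum_diag]
  simp only [Finset.sum_mul_sum]
  simp only [mul_comm, mul_left_comm, mul_assoc]
  ring

/-- Second mixed moment of the Monte-Carlo weight estimators: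
`N² E[γ̂²_{ij} γ̂²_{kℓ}] = N E[ε₁₁⁴] ∑_p W_{ip} W_{jp} W_{kp} W_{ℓp}
 + N E[ε₁₁²]² ∑_{p≠q} W_{ip} W_{jp} W_{kq} W_{ℓq}
 + N E[ε₁₁²]² ∑_{p≠q} W_{ip} W_{jq} W_{kp} W_{ℓq}
 + N E[ε₁₁²]² ∑_{p≠q} W_{ip} W_{jq} W_{kq} W_{ℓp}
 + N(N−1) E[ε₁₁²]² ∑_{p,q} W_{ip} W_{jp} W_{kq} W_{ℓq}`. -/
theorem mc_weight_estimator_second_mixed_moment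
    {Ω : Type*} [MeasurableSpace Ω] (μ : Measure Ω) [IsProbabilityMeasure μ]
    {M n N : ℕ} (hn : 0 < n) (hN : 0 < N)
    (W : Matrix (Fin M) (Fin n) ℝ)
    (ε : Fin n × Fin N → Ω → ℝ)
    (hmeas : ∀ pk, Measurable (ε pk))
    (hindep : iIndepFun ε μ)
    (hident : ∀ pk qk, IdentDistrib (ε pk) (ε qk) μ μ)
    (hL4 : ∀ pk, MemLp (ε pk) 4 μ)
    (hmean : ∀ pk, ∫ ω, ε pk ω ∂μ = 0)
    (hvar : ∀ pk, ∫ ω, (ε pk ω) ^ 2 ∂μ = 1)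
    (i j k l : Fin M) :
    (N : ℝ) ^ 2 *
        ∫ ω,
          ((N : ℝ)⁻¹ * ∑ a : Fin N,
              (∑ p : Fin n, W i p * ε (p, a) ω) * (∑ p : Fin n, W j p * ε (p, a) ω)) *
          ((N : ℝ)⁻¹ * ∑ b : Fin N,
              (∑ p : Fin n, W k p * ε (p, b) ω) * (∑ p : Fin n, W l p * ε (p, b) ω)) ∂μ
      = (N : ℝ) * (∫ ω, (ε (⟨0, hn⟩, ⟨0, hN⟩) ω) ^ 4 ∂μ) *
            ∑ p : Fin n, W i p * W j p * W k p * W l p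
        + (N : ℝ) * (∫ ω, (ε (⟨0, hn⟩, ⟨0, hN⟩) ω) ^ 2 ∂μ) ^ 2 *
            ∑ p : Fin n, ∑ q : Fin n,
              (if p = q then 0 else W i p * W j p * W k q * W l q)
        + (N : ℝ) * (∫ ω, (ε (⟨0, hn⟩, ⟨0, hN⟩) ω) ^ 2 ∂μ) ^ 2 *
            ∑ p : Fin n, ∑ q : Fin n,
              (if p = q then 0 else W i p * W j q * W k p * W l q)
        + (N : ℝ) * (∫ ω, (ε (⟨0, hn⟩, ⟨0, hN⟩) ω) ^ 2 ∂μ) ^ 2 *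
            ∑ p : Fin n, ∑ q : Fin n,
              (if p = q then 0 else W i p * W j q * W k q * W l p)
        + (N : ℝ) * ((N : ℝ) - 1) * (∫ ω, (ε (⟨0, hn⟩, ⟨0, hN⟩) ω) ^ 2 ∂μ) ^ 2 *
            ∑ p : Fin n, ∑ q : Fin n, W i p * W j p * W k q * W l q :=
  mc_weight_estimator_second_mixed_moment_general μ hn hN W ε hmeas hindep hident hL4 hmean hvar i j
    k l
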